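/- arXiv:2102.01843 — 5 statements merged into one kernel-verified Lean document; each statement's English description precedes it below -/
import Mathlib

section
/- For j = 1,2,3 let L_j > 0 and let σ_j : ℝ → ℝ be nonnegative, locally integrable, and identically zero on [−L_j/2, L_j/2], and let s₁ > 0. Define the stretched coordinates x̃ ∈ ℝ³ of x ∈ ℝ³ by x̃_j = x_j + s₁⁻¹ ∫₀^{x_j} σ_j(τ) dτ. Then for every x ∈ ℝ³ and every y ∈ ℝ³ with |y_j| ≤ L_j/2 for all j, one has |x̃ − y| ≥ |x − y|, where |·| is the Euclidean norm on ℝ³. -/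
open MeasureTheory

/-- The real coordinate stretching increases the Euclidean distance to any point y
of the box [-L₁/2, L₁/2] × [-L₂/2, L₂/2] × [-L₃/2, L₃/2]: |x̃ - y| ≥ |x - y|. -/
theorem stretched_distance_ge (L : Fin 3 → ℝ) (σ : Fin 3 → ℝ → ℝ) (s₁ : ℝ)
    (hL : ∀ j, 0 < L j) (hs₁ : 0 < s₁)
    (hnn : ∀ j, ∀ τ : ℝ, 0 ≤ σ j τ)
    (hloc : ∀ j, LocallyIntegrable (σ j) volume)
    (hzero : ∀ j, ∀ τ ∈ Set.Icc (-(L j / 2)) (L j / 2), σ j τ = 0)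
    (x y : EuclideanSpace ℝ (Fin 3))
    (xt : EuclideanSpace ℝ (Fin 3))
    (hxt : ∀ j, xt j = x j + s₁⁻¹ * ∫ τ in (0:ℝ)..(x j), σ j τ)
    (hy : ∀ j, |y j| ≤ L j / 2) :
    ‖x - y‖ ≤ ‖xt - y‖ := by
  have key : ∀ j, |x j - y j| ≤ |xt j - y j| := by
    intro j
    set I : ℝ := ∫ τ in (0:ℝ)..(x j), σ j τ with hI
    have hy' := abs_le.mp (hy j)
    rcases le_or_gt (x j) (L j / 2) with h1 | h1
    · rcases le_or_gt (-(L j / 2)) (x j) with h2 | h2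
      · -- x j in the box: integral vanishes
        have hI0 : I = 0 := by
          rw [hI]
          have heq : Set.EqOn (σ j) 0 (Set.uIcc (0:ℝ) (x j)) := by
            intro τ hτ
            refine hzero j τ ?_
            refine Set.uIcc_subset_Icc ?_ ⟨h2, h1⟩ hτ
            constructor <;> linarith [hL j]
          rw [intervalIntegral.integral_congr heq]
          simp
        rw [hxt j, ← hI, hI0]
        simp
      · -- x j < -(L j / 2): d ≤ 0, I ≤ 0
        have hIle : I ≤ 0 := by
          rw [hI, intervalIntegral.integral_symm]
          have : 0 ≤ ∫ τ in (x j)..(0:ℝ), σ j τ :=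
            intervalIntegral.integral_nonneg (by linarith [hL j]) (fun τ _ => hnn j τ)
          linarith
        have hd : x j - y j ≤ 0 := by linarith [hy'.1]
        have hc : s₁⁻¹ * I ≤ 0 :=
          mul_nonpos_of_nonneg_of_nonpos (by positivity) hIle
        rw [hxt j, abs_of_nonpos hd, abs_of_nonpos (by linarith)]
        linarith
    · -- x j > L j / 2 : d ≥ 0, I ≥ 0
      have hIge : 0 ≤ I :=
        intervalIntegral.integral_nonneg (by linarith [hL j]) (fun τ _ => hnn j τ)
      have hd : 0 ≤ x j - y j := by linarith [hy'.2]
      have hc : 0 ≤ s₁⁻¹ * I := mul_nonneg (by positivity) hIge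
      rw [hxt j, abs_of_nonneg hd, abs_of_nonneg (by linarith)]
      linarith
  rw [EuclideanSpace.norm_eq, EuclideanSpace.norm_eq]
  apply Real.sqrt_le_sqrt
  apply Finset.sum_le_sum
  intro j _
  simp only [PiLp.sub_apply, Real.norm_eq_abs]
  exact pow_le_pow_left₀ (abs_nonneg _) (key j) 2
end

section
/- For j = 1,2,3 let L_j > 0 and let σ_j : ℝ → ℝ be nonnegative, locally integrable, and identically zero on [−L_j/2, L_j/2], and let s₁ > 0. Define the stretched coordinates x̃ ∈ ℝ³ of x ∈ ℝ³ by x̃_j = x_j + s₁⁻¹ ∫₀^{x_j} σ_j(τ) dτ. Then for every x ∈ ℝ³ and every y ∈ ℝ³ with |y_j| ≤ L_j/2 for all j, one has s₁·|x̃ − y| ≥ ( Σ_{j=1}^{3} ( ∫₀^{x_j} σ_j(τ) dτ )² )^{1/2}, where |·| is the Euclidean norm on ℝ³. -/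
/-!
Write `I = ∫₀^a σ` for one coordinate `a = x_j`. Since `σ ≥ 0` vanishes on `[-ℓ, ℓ]`, `I` is
nonzero only when `|a| > ℓ`, and then it has the sign of `a`, hence of `a - b` for every `|b| ≤ ℓ`.
So `s (ã - b) = s (a - b) + I` adds to `I` a term of the same sign, giving `|I| ≤ s |ã - b|`
coordinatewise; summing the squares gives the Euclidean estimate.
-/

open MeasureTheory

section

variable {σ : ℝ → ℝ} {ℓ : ℝ}

lemma intervalIntegral_eq_zero_of_abs_le (hzero : ∀ τ ∈ Set.Icc (-ℓ) ℓ, σ τ = 0) {a : ℝ}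
    (ha : |a| ≤ ℓ) : ∫ τ in (0:ℝ)..a, σ τ = 0 := by
  rw [abs_le] at ha
  calc ∫ τ in (0:ℝ)..a, σ τ = ∫ _ in (0:ℝ)..a, (0:ℝ) := by
        refine intervalIntegral.integral_congr fun τ hτ => hzero τ ?_
        rcases Set.mem_uIcc.mp hτ with h | h <;> constructor <;> linarith [h.1, h.2]
    _ = 0 := intervalIntegral.integral_zero

lemma intervalIntegral_nonpos_of_nonpos (hnn : ∀ τ, 0 ≤ σ τ) {a : ℝ} (ha : a ≤ 0) :
    ∫ τ in (0:ℝ)..a, σ τ ≤ 0 := by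
  rw [intervalIntegral.integral_symm, neg_nonpos]
  exact intervalIntegral.integral_nonneg ha fun τ _ => hnn τ

lemma intervalIntegral_mul_sub_nonneg (hnn : ∀ τ, 0 ≤ σ τ)
    (hzero : ∀ τ ∈ Set.Icc (-ℓ) ℓ, σ τ = 0) (a : ℝ) {b : ℝ} (hb : |b| ≤ ℓ) :
    0 ≤ (∫ τ in (0:ℝ)..a, σ τ) * (a - b) := by
  obtain ⟨hb₁, hb₂⟩ := abs_le.mp hb
  rcases le_or_gt a (-ℓ) with ha | ha
  · exact mul_nonneg_of_nonpos_of_nonpos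
      (intervalIntegral_nonpos_of_nonpos hnn (by linarith)) (by linarith)
  rcases le_or_gt a ℓ with ha' | ha'
  · rw [intervalIntegral_eq_zero_of_abs_le hzero (abs_le.mpr ⟨ha.le, ha'⟩), zero_mul]
  · exact mul_nonneg (intervalIntegral.integral_nonneg (by linarith) fun τ _ => hnn τ)
      (by linarith)

lemma sq_intervalIntegral_le_sq_stretch (hnn : ∀ τ, 0 ≤ σ τ)
    (hzero : ∀ τ ∈ Set.Icc (-ℓ) ℓ, σ τ = 0) {s : ℝ} (hs : 0 ≤ s) (a : ℝ) {b : ℝ}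
    (hb : |b| ≤ ℓ) :
    (∫ τ in (0:ℝ)..a, σ τ) ^ 2 ≤ (s * (a - b) + ∫ τ in (0:ℝ)..a, σ τ) ^ 2 := by
  have := intervalIntegral_mul_sub_nonneg hnn hzero a hb
  nlinarith [mul_nonneg hs this, sq_nonneg (s * (a - b))]

end

theorem stretched_distance_ge_damping_general (L : Fin 3 → ℝ) (σ : Fin 3 → ℝ → ℝ) (s₁ : ℝ)
    (hs₁ : 0 < s₁)
    (hnn : ∀ j, ∀ τ : ℝ, 0 ≤ σ j τ)
    (hzero : ∀ j, ∀ τ ∈ Set.Icc (-(L j / 2)) (L j / 2), σ j τ = 0)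
    (x y : EuclideanSpace ℝ (Fin 3))
    (xt : EuclideanSpace ℝ (Fin 3))
    (hxt : ∀ j, xt j = x j + s₁⁻¹ * ∫ τ in (0:ℝ)..(x j), σ j τ)
    (hy : ∀ j, |y j| ≤ L j / 2) :
    Real.sqrt (∑ j : Fin 3, (∫ τ in (0:ℝ)..(x j), σ j τ) ^ 2) ≤ s₁ * ‖xt - y‖ := by
  rw [← abs_of_pos hs₁, ← Real.norm_eq_abs, ← norm_smul, EuclideanSpace.norm_eq]
  refine Real.sqrt_le_sqrt (Finset.sum_le_sum fun j _ => ?_)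
  have hstretch : (s₁ • (xt - y)) j = s₁ * (x j - y j) + ∫ τ in (0:ℝ)..(x j), σ j τ := by
    simp only [PiLp.smul_apply, PiLp.sub_apply, smul_eq_mul, hxt]
    field_simp
    ring
  rw [hstretch, Real.norm_eq_abs, sq_abs]
  exact sq_intervalIntegral_le_sq_stretch (hnn j) (hzero j) hs₁.le (x j) (hy j)

/-- For the real coordinate stretching, s₁ · |x̃ - y| dominates the Euclidean norm of
the vector of integrals (∫₀^{x_j} σ_j(τ) dτ)_{j=1,2,3}, whenever |y_j| ≤ L_j/2. -/
theorem stretched_distance_ge_damping (L : Fin 3 → ℝ) (σ : Fin 3 → ℝ → ℝ) (s₁ : ℝ)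
    (hL : ∀ j, 0 < L j) (hs₁ : 0 < s₁)
    (hnn : ∀ j, ∀ τ : ℝ, 0 ≤ σ j τ)
    (hloc : ∀ j, LocallyIntegrable (σ j) volume)
    (hzero : ∀ j, ∀ τ ∈ Set.Icc (-(L j / 2)) (L j / 2), σ j τ = 0)
    (x y : EuclideanSpace ℝ (Fin 3))
    (xt : EuclideanSpace ℝ (Fin 3))
    (hxt : ∀ j, xt j = x j + s₁⁻¹ * ∫ τ in (0:ℝ)..(x j), σ j τ)
    (hy : ∀ j, |y j| ≤ L j / 2) :
    Real.sqrt (∑ j : Fin 3, (∫ τ in (0:ℝ)..(x j), σ j τ) ^ 2) ≤ s₁ * ‖xt - y‖ :=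
  stretched_distance_ge_damping_general L σ s₁ hs₁ hnn hzero x y xt hxt hy
end

section
/- (Lemma 4.4, second claim.) Let s = s₁ + i s₂ with s₁ > 0, s₂ ∈ ℝ, and define the complex distance ρ_s(x̃, y) = s·|x̃ − y|. Then for every x ∈ Γ₂ and y ∈ Γ₁ one has Re[ρ_s(x̃, y)] = s₁·|x̃ − y| ≥ σ₀ d/(m+1). -/
/-!
Choose a coordinate `j` with `|x_j| = L_j/2 + d`. Across the absorbing layer the damping profile
integrates to `∫_{L_j/2}^{L_j/2+d} σ₀ ((τ - L_j/2)/d)^m dτ = σ₀ d/(m+1)`, and the stretching pushes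
`x̃_j` outwards, so `|x̃_j| = L_j/2 + d + s₁⁻¹ σ₀ d/(m+1)`. Since `|y_j| ≤ L_j/2`, already the `j`-th
coordinate of `x̃ - y` has size at least `s₁⁻¹ σ₀ d/(m+1)`.
-/

open intervalIntegral Set
open scoped Interval

noncomputable def stretchedCoord (s : ℝ) (σ : ℝ → ℝ) (x : ℝ) : ℝ :=
  x + s⁻¹ * ∫ τ in (0 : ℝ)..x, σ τ

section PMLProfile

variable {c d σ₀ : ℝ} {m : ℕ} {σ : ℝ → ℝ}

theorem integral_pml_ramp (hc : 0 ≤ c) (hd : 0 < d)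
    (h_zero : ∀ τ ∈ Ioc 0 c, σ τ = 0)
    (h_ramp : ∀ τ ∈ Ioc c (c + d), σ τ = σ₀ * ((τ - c) / d) ^ m) :
    ∫ τ in (0 : ℝ)..c + d, σ τ = σ₀ * d / (m + 1) := by
  have h_zero' : EqOn σ 0 (Ι 0 c) := by rwa [uIoc_of_le hc]
  have h_ramp' : EqOn σ (fun τ => σ₀ * ((τ - c) / d) ^ m) (Ι c (c + d)) := by
    rwa [uIoc_of_le (by linarith)]
  have hi_zero : IntervalIntegrable σ MeasureTheory.volume 0 c :=
    (intervalIntegrable_congr h_zero').mpr intervalIntegrable_const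
  have hi_ramp : IntervalIntegrable σ MeasureTheory.volume c (c + d) :=
    (intervalIntegrable_congr h_ramp').mpr ((by fun_prop : Continuous _).intervalIntegrable _ _)
  rw [← integral_add_adjacent_intervals hi_zero hi_ramp,
    integral_congr_ae (MeasureTheory.ae_of_all _ h_zero'),
    integral_congr_ae (MeasureTheory.ae_of_all _ h_ramp'),
    integral_comp_sub_right (fun u => σ₀ * (u / d) ^ m),
    integral_comp_div (fun u => σ₀ * u ^ m) hd.ne']
  simp only [Pi.zero_apply, integral_zero, sub_self, add_sub_cancel_left, zero_div,
    div_self hd.ne', intervalIntegral.integral_const_mul, integral_pow, one_pow,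
    zero_pow m.succ_ne_zero, sub_zero, smul_eq_mul, zero_add]
  field_simp

theorem integral_pml_profile (hc : 0 ≤ c) (hd : 0 < d)
    (h_zero : ∀ τ : ℝ, |τ| ≤ c → σ τ = 0)
    (h_ramp : ∀ τ : ℝ, c < |τ| → |τ| ≤ c + d → σ τ = σ₀ * ((|τ| - c) / d) ^ m) :
    ∫ τ in (0 : ℝ)..c + d, σ τ = σ₀ * d / (m + 1) := by
  refine integral_pml_ramp hc hd (fun τ hτ => h_zero τ ?_) (fun τ hτ => ?_)
  · rw [abs_of_pos hτ.1]; exact hτ.2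
  · have habs : |τ| = τ := abs_of_pos (hc.trans_lt hτ.1)
    rw [h_ramp τ (by rw [habs]; exact hτ.1) (by rw [habs]; exact hτ.2), habs]

theorem abs_stretchedCoord_of_abs_eq {s x : ℝ} (hc : 0 ≤ c) (hd : 0 < d) (hσ₀ : 0 ≤ σ₀)
    (hs : 0 < s) (h_zero : ∀ τ : ℝ, |τ| ≤ c → σ τ = 0)
    (h_ramp : ∀ τ : ℝ, c < |τ| → |τ| ≤ c + d → σ τ = σ₀ * ((|τ| - c) / d) ^ m)
    (hx : |x| = c + d) :
    |stretchedCoord s σ x| = c + d + s⁻¹ * (σ₀ * d / (m + 1)) := by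
  have hK : 0 ≤ s⁻¹ * (σ₀ * d / (m + 1)) := by positivity
  unfold stretchedCoord
  rcases (abs_eq (by positivity)).mp hx with rfl | rfl
  · rw [integral_pml_profile hc hd h_zero h_ramp, abs_of_nonneg (by positivity)]
  · have h_neg : ∫ τ in (0 : ℝ)..-(c + d), σ τ = -(σ₀ * d / (m + 1)) := by
      rw [integral_symm, ← integral_pml_profile (σ := fun τ => σ (-τ)) hc hd
        (fun τ hτ => h_zero (-τ) (by rwa [abs_neg]))
        (fun τ hτ₁ hτ₂ => by rw [h_ramp (-τ) (by rwa [abs_neg]) (by rwa [abs_neg]), abs_neg]),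
        integral_comp_neg (fun τ => σ τ), neg_zero]
    rw [h_neg, abs_of_nonpos (by linarith)]
    ring

end PMLProfile

theorem complex_distance_real_part_general (L : Fin 3 → ℝ) (d σ₀ s₁ s₂ : ℝ) (m : ℕ)
    (hd : 0 < d) (hσ₀ : 0 < σ₀) (hs₁ : 0 < s₁)
    (σ : Fin 3 → ℝ → ℝ)
    (h1 : ∀ j, ∀ τ : ℝ, |τ| ≤ L j / 2 → σ j τ = 0)
    (h2 : ∀ j, ∀ τ : ℝ, L j / 2 < |τ| → |τ| ≤ L j / 2 + d →
      σ j τ = σ₀ * ((|τ| - L j / 2) / d) ^ m)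
    (s : ℂ) (hs : s = (s₁ : ℂ) + Complex.I * s₂)
    (x y : EuclideanSpace ℝ (Fin 3))
    (hxΓ₂ : (∀ j, |x j| ≤ L j / 2 + d) ∧ ∃ j, |x j| = L j / 2 + d)
    (hyΓ₁ : (∀ j, |y j| ≤ L j / 2) ∧ ∃ j, |y j| = L j / 2)
    (xt : EuclideanSpace ℝ (Fin 3))
    (hxt : ∀ j, xt j = x j + s₁⁻¹ * ∫ τ in (0:ℝ)..(x j), σ j τ) :
    (s * ‖xt - y‖).re = s₁ * ‖xt - y‖ ∧ σ₀ * d / (m + 1) ≤ s₁ * ‖xt - y‖ := by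
  refine ⟨by simp [hs], ?_⟩
  obtain ⟨-, j, hxj⟩ := hxΓ₂
  have hyj : |y j| ≤ L j / 2 := hyΓ₁.1 j
  have hxtj : |xt j| = L j / 2 + d + s₁⁻¹ * (σ₀ * d / (m + 1)) := by
    rw [hxt j]
    exact abs_stretchedCoord_of_abs_eq ((abs_nonneg _).trans hyj) hd hσ₀.le hs₁
      (h1 j) (h2 j) hxj
  calc σ₀ * d / (m + 1) = s₁ * (s₁⁻¹ * (σ₀ * d / (m + 1))) := by field_simp
    _ ≤ s₁ * (|xt j| - |y j|) := by gcongr; linarith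
    _ ≤ s₁ * |xt j - y j| := by gcongr; exact abs_sub_abs_le_abs_sub _ _
    _ = s₁ * ‖(xt - y) j‖ := by rw [PiLp.sub_apply, Real.norm_eq_abs]
    _ ≤ s₁ * ‖xt - y‖ := by gcongr; exact PiLp.norm_apply_le _ _

/-- Lemma 4.4, second claim: for x ∈ Γ₂ and y ∈ Γ₁ the complex distance
ρ_s(x̃, y) = s·|x̃ - y| satisfies Re[ρ_s(x̃, y)] = s₁·|x̃ - y| ≥ σ₀ d/(m+1). -/
theorem complex_distance_real_part (L : Fin 3 → ℝ) (d σ₀ s₁ s₂ : ℝ) (m : ℕ)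
    (hL : ∀ j, 0 < L j) (hd : 0 < d) (hσ₀ : 0 < σ₀) (hm : 1 ≤ m) (hs₁ : 0 < s₁)
    (σ : Fin 3 → ℝ → ℝ)
    (h1 : ∀ j, ∀ τ : ℝ, |τ| ≤ L j / 2 → σ j τ = 0)
    (h2 : ∀ j, ∀ τ : ℝ, L j / 2 < |τ| → |τ| ≤ L j / 2 + d →
      σ j τ = σ₀ * ((|τ| - L j / 2) / d) ^ m)
    (h3 : ∀ j, ∀ τ : ℝ, L j / 2 + d < |τ| → σ j τ = σ₀)
    (s : ℂ) (hs : s = (s₁ : ℂ) + Complex.I * s₂)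
    (x y : EuclideanSpace ℝ (Fin 3))
    (hxΓ₂ : (∀ j, |x j| ≤ L j / 2 + d) ∧ ∃ j, |x j| = L j / 2 + d)
    (hyΓ₁ : (∀ j, |y j| ≤ L j / 2) ∧ ∃ j, |y j| = L j / 2)
    (xt : EuclideanSpace ℝ (Fin 3))
    (hxt : ∀ j, xt j = x j + s₁⁻¹ * ∫ τ in (0:ℝ)..(x j), σ j τ) :
    (s * ‖xt - y‖).re = s₁ * ‖xt - y‖ ∧ σ₀ * d / (m + 1) ≤ s₁ * ‖xt - y‖ :=
  complex_distance_real_part_general L d σ₀ s₁ s₂ m hd hσ₀ hs₁ σ h1 h2 s hs x y hxΓ₂ hyΓ₁ xt hxt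
end

section
/- Let ε > 0 and μ > 0, let s = s₁ + i s₂ with s₁ > 0, s₂ ∈ ℝ, and define the stretched fundamental solution Φ̃_s(x, y) = exp(−√(εμ)·s·|x̃ − y|) / (4π·|x̃ − y|) for x̃ ≠ y. Then for every x ∈ Γ₂ and y ∈ Γ₁ one has the decay bound |Φ̃_s(x, y)| ≤ exp(−√(εμ)·σ₀ d/(m+1)) / (4π d). -/
/-!
Pick a coordinate `j` with `|x_j| = L_j/2 + d`. Integrating the polynomial damping profile across
the layer gives `∫₀^{x_j} σ_j = ± σ₀ d/(m+1)` with the sign of `x_j`, so the stretching pushes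
`x̃_j` outwards and `|x̃_j - y_j| ≥ d + σ₀ d/((m+1) s₁)` because `|y_j| ≤ L_j/2`. Hence
`r = |x̃ - y|` satisfies both `r ≥ d` and `s₁ r ≥ σ₀ d/(m+1)`, and
`|Φ̃_s| = exp(-√(εμ) s₁ r)/(4π r)` is bounded by the claimed quantity.
-/

open Real Set intervalIntegral

theorem integral_pml_profile_s8 {f : ℝ → ℝ} {ℓ d σ₀ : ℝ} {m : ℕ} (hℓ : 0 ≤ ℓ) (hd : 0 < d)
    (h_inner : EqOn f 0 (Ioc 0 ℓ))
    (h_layer : EqOn f (fun τ ↦ σ₀ * ((τ - ℓ) / d) ^ m) (Ioc ℓ (ℓ + d))) :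
    ∫ τ in 0..ℓ + d, f τ = σ₀ * d / (m + 1) := by
  rw [← uIoc_of_le hℓ] at h_inner
  rw [← uIoc_of_le (by linarith)] at h_layer
  have h_int_inner : ∫ τ in 0..ℓ, f τ = 0 := by
    rw [integral_congr_ae (.of_forall fun τ hτ ↦ h_inner hτ)]
    simp
  have h_int_layer : ∫ τ in ℓ..ℓ + d, f τ = σ₀ * d / (m + 1) := by
    rw [integral_congr_ae (.of_forall fun τ hτ ↦ h_layer hτ), integral_const_mul,
      integral_comp_sub_right (fun t ↦ (t / d) ^ m), integral_comp_div (fun t ↦ t ^ m) hd.ne',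
      integral_pow]
    simp only [add_sub_cancel_left, sub_self, zero_div, div_self hd.ne', one_pow,
      zero_pow m.succ_ne_zero, sub_zero, smul_eq_mul]
    field_simp
  rw [← integral_add_adjacent_intervals
    ((intervalIntegrable_congr h_inner).2 (continuous_const.intervalIntegrable _ _))
    ((intervalIntegrable_congr h_layer).2 ((by fun_prop : Continuous _).intervalIntegrable _ _)),
    h_int_inner, h_int_layer, zero_add]

section

variable {σ : ℝ → ℝ} {ℓ d σ₀ : ℝ} {m : ℕ}

theorem integral_pml_damping (hℓ : 0 ≤ ℓ) (hd : 0 < d)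
    (h_inner : ∀ τ, |τ| ≤ ℓ → σ τ = 0)
    (h_layer : ∀ τ, ℓ < |τ| → |τ| ≤ ℓ + d → σ τ = σ₀ * ((|τ| - ℓ) / d) ^ m) :
    ∫ τ in 0..ℓ + d, σ τ = σ₀ * d / (m + 1) := by
  refine integral_pml_profile_s8 hℓ hd (fun τ hτ ↦ ?_) (fun τ hτ ↦ ?_)
  · exact h_inner τ (by rw [abs_of_pos hτ.1]; exact hτ.2)
  · have hτ_abs : |τ| = τ := abs_of_pos (hℓ.trans_lt hτ.1)
    rw [h_layer τ (by rw [hτ_abs]; exact hτ.1) (by rw [hτ_abs]; exact hτ.2), hτ_abs]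

theorem abs_stretched_coord_of_abs_eq {s₁ b : ℝ} (hℓ : 0 ≤ ℓ) (hd : 0 < d) (hσ₀ : 0 ≤ σ₀) (hs₁ : 0 < s₁)
    (h_inner : ∀ τ, |τ| ≤ ℓ → σ τ = 0)
    (h_layer : ∀ τ, ℓ < |τ| → |τ| ≤ ℓ + d → σ τ = σ₀ * ((|τ| - ℓ) / d) ^ m)
    (hb : |b| = ℓ + d) :
    |b + s₁⁻¹ * ∫ τ in 0..b, σ τ| = ℓ + d + s₁⁻¹ * (σ₀ * d / (m + 1)) := by
  have hc : 0 ≤ s₁⁻¹ * (σ₀ * d / (m + 1)) := by positivity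
  rcases abs_eq (by linarith : 0 ≤ ℓ + d) |>.1 hb with rfl | rfl
  · rw [integral_pml_damping hℓ hd h_inner h_layer]
    exact abs_of_nonneg (by positivity)
  · have h_refl : ∫ τ in 0..ℓ + d, σ (-τ) = σ₀ * d / (m + 1) :=
      integral_pml_damping hℓ hd (fun τ ↦ by simpa using h_inner (-τ))
        (fun τ ↦ by simpa using h_layer (-τ))
    rw [← neg_zero, ← integral_comp_neg, integral_symm, h_refl, mul_neg,
      abs_of_nonpos (by linarith)]
    ring

end

theorem norm_exp_neg_mul_div_le {a c d r : ℝ} {s : ℂ} (ha : 0 ≤ a) (hd : 0 < d) (hdr : d ≤ r)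
    (hc : c ≤ s.re * r) :
    ‖Complex.exp (-(a : ℂ) * s * (r : ℂ)) / ((4 * π * r : ℝ) : ℂ)‖ ≤
      Real.exp (-a * c) / (4 * π * d) := by
  have h_re : (-(a : ℂ) * s * (r : ℂ)).re = -a * (s.re * r) := by
    simp only [Complex.mul_re, Complex.neg_re, Complex.neg_im, Complex.ofReal_re,
      Complex.ofReal_im]
    ring
  have hr : 0 < r := hd.trans_le hdr
  rw [norm_div, Complex.norm_exp, h_re, Complex.norm_real, Real.norm_of_nonneg (by positivity)]
  exact div_le_div₀ (by positivity)
    (Real.exp_le_exp.2 (mul_le_mul_of_nonpos_left hc (neg_nonpos.2 ha))) (by positivity)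
    (by gcongr)

theorem stretched_fundamental_solution_decay_general
    (ε μ : ℝ)
    (L : Fin 3 → ℝ) (d σ₀ s₁ s₂ : ℝ) (m : ℕ)
    (hd : 0 < d) (hσ₀ : 0 < σ₀) (hs₁ : 0 < s₁)
    (σ : Fin 3 → ℝ → ℝ)
    (h1 : ∀ j, ∀ τ : ℝ, |τ| ≤ L j / 2 → σ j τ = 0)
    (h2 : ∀ j, ∀ τ : ℝ, L j / 2 < |τ| → |τ| ≤ L j / 2 + d →
      σ j τ = σ₀ * ((|τ| - L j / 2) / d) ^ m)
    (s : ℂ) (hs : s = (s₁ : ℂ) + Complex.I * s₂)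
    (x y : EuclideanSpace ℝ (Fin 3))
    (hxΓ₂ : (∀ j, |x j| ≤ L j / 2 + d) ∧ ∃ j, |x j| = L j / 2 + d)
    (hyΓ₁ : (∀ j, |y j| ≤ L j / 2) ∧ ∃ j, |y j| = L j / 2)
    (xt : EuclideanSpace ℝ (Fin 3))
    (hxt : ∀ j, xt j = x j + s₁⁻¹ * ∫ τ in (0:ℝ)..(x j), σ j τ) :
    ‖Complex.exp (-(Real.sqrt (ε * μ) : ℂ) * s * (‖xt - y‖ : ℂ)) /
        ((4 * π * ‖xt - y‖ : ℝ) : ℂ)‖ ≤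
      Real.exp (-(Real.sqrt (ε * μ)) * (σ₀ * d / (m + 1))) / (4 * π * d) := by
  obtain ⟨-, j, hxj⟩ := hxΓ₂
  obtain ⟨hy, -⟩ := hyΓ₁
  set c := σ₀ * d / (m + 1)
  have hxt_j : |xt j| = L j / 2 + d + s₁⁻¹ * c := by
    rw [hxt j]
    exact abs_stretched_coord_of_abs_eq ((abs_nonneg _).trans (hy j)) hd hσ₀.le hs₁ (h1 j) (h2 j) hxj
  have h_dist : d + s₁⁻¹ * c ≤ ‖xt - y‖ :=
    calc d + s₁⁻¹ * c ≤ |xt j| - |y j| := by linarith [hy j]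
      _ ≤ |xt j - y j| := abs_sub_abs_le_abs_sub _ _
      _ ≤ ‖xt - y‖ := PiLp.norm_apply_le (xt - y) j
  have hc : 0 ≤ s₁⁻¹ * c := by positivity
  refine norm_exp_neg_mul_div_le (Real.sqrt_nonneg _) hd (by linarith) ?_
  calc c ≤ s₁ * (d + s₁⁻¹ * c) := by
        rw [mul_add, mul_inv_cancel_left₀ hs₁.ne']
        exact le_add_of_nonneg_left (by positivity)
    _ ≤ s.re * ‖xt - y‖ := by
        rw [show s.re = s₁ by simp [hs]]
        gcongr

/-- Decay of the stretched fundamental solution: for x ∈ Γ₂ and y ∈ Γ₁,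
|Φ̃_s(x, y)| ≤ exp(−√(εμ)·σ₀ d/(m+1)) / (4π d). -/
theorem stretched_fundamental_solution_decay
    (ε μ : ℝ) (hε : 0 < ε) (hμ : 0 < μ)
    (L : Fin 3 → ℝ) (d σ₀ s₁ s₂ : ℝ) (m : ℕ)
    (hL : ∀ j, 0 < L j) (hd : 0 < d) (hσ₀ : 0 < σ₀) (hm : 1 ≤ m) (hs₁ : 0 < s₁)
    (σ : Fin 3 → ℝ → ℝ)
    (h1 : ∀ j, ∀ τ : ℝ, |τ| ≤ L j / 2 → σ j τ = 0)
    (h2 : ∀ j, ∀ τ : ℝ, L j / 2 < |τ| → |τ| ≤ L j / 2 + d →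
      σ j τ = σ₀ * ((|τ| - L j / 2) / d) ^ m)
    (h3 : ∀ j, ∀ τ : ℝ, L j / 2 + d < |τ| → σ j τ = σ₀)
    (s : ℂ) (hs : s = (s₁ : ℂ) + Complex.I * s₂)
    (x y : EuclideanSpace ℝ (Fin 3))
    (hxΓ₂ : (∀ j, |x j| ≤ L j / 2 + d) ∧ ∃ j, |x j| = L j / 2 + d)
    (hyΓ₁ : (∀ j, |y j| ≤ L j / 2) ∧ ∃ j, |y j| = L j / 2)
    (xt : EuclideanSpace ℝ (Fin 3))
    (hxt : ∀ j, xt j = x j + s₁⁻¹ * ∫ τ in (0:ℝ)..(x j), σ j τ) :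
    ‖Complex.exp (-(Real.sqrt (ε * μ) : ℂ) * s * (‖xt - y‖ : ℂ)) /
        ((4 * π * ‖xt - y‖ : ℝ) : ℂ)‖ ≤
      Real.exp (-(Real.sqrt (ε * μ)) * (σ₀ * d / (m + 1))) / (4 * π * d) :=
  stretched_fundamental_solution_decay_general ε μ L d σ₀ s₁ s₂ m hd hσ₀ hs₁ σ h1 h2 s hs x y hxΓ₂
    hyΓ₁ xt hxt
end

section
/- (Scalar core of the PML coercivity estimates (4.17) and (4.24).) Let s ∈ ℂ with s₁ = Re(s) > 0, let σ₀ > 0 and set M = 1 + σ₀/s₁. If β and γ are real numbers with M⁻² ≤ β ≤ M and M⁻¹ ≤ γ ≤ M², then for all real a, b ≥ 0 one has Re(s⁻¹·β·a + s·γ·b) ≥ M⁻²·(s₁/|s|²)·(a + |s|²·b). -/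
/-! Since `Re s⁻¹ = s₁/|s|²` and `Re s = |s|² · (s₁/|s|²)`, each of the two terms is bounded below
by its coefficient `β` resp. `γ` times the corresponding term of the right-hand side; and
`M ≥ 1` gives `M⁻² ≤ M⁻¹`, so `M⁻²` is a common lower bound for `β` and `γ`. -/

namespace Complex

theorem re_inv_mul_add_mul_ofReal (s : ℂ) (β a γ b : ℝ) :
    (s⁻¹ * β * a + s * γ * b).re = β * a * (s.re / ‖s‖ ^ 2) + γ * b * s.re := by
  simp only [add_re, mul_assoc, ← ofReal_mul, re_mul_ofReal, inv_re, normSq_eq_norm_sq]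
  ring

theorem le_re_inv_mul_add_mul_ofReal {s : ℂ} (hs : 0 ≤ s.re)
    {c β γ a b : ℝ} (hβ : c ≤ β) (hγ : c ≤ γ) (ha : 0 ≤ a) (hb : 0 ≤ b) :
    c * (s.re / ‖s‖ ^ 2) * (a + ‖s‖ ^ 2 * b) ≤ (s⁻¹ * β * a + s * γ * b).re := by
  have hcancel : ‖s‖ ^ 2 * (s.re / ‖s‖ ^ 2) = s.re := by
    rcases eq_or_ne s 0 with rfl | hs0
    · simp
    · field_simp
  calc c * (s.re / ‖s‖ ^ 2) * (a + ‖s‖ ^ 2 * b)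
      = c * a * (s.re / ‖s‖ ^ 2) + c * b * (‖s‖ ^ 2 * (s.re / ‖s‖ ^ 2)) := by ring
    _ = c * a * (s.re / ‖s‖ ^ 2) + c * b * s.re := by rw [hcancel]
    _ ≤ β * a * (s.re / ‖s‖ ^ 2) + γ * b * s.re := by gcongr
    _ = (s⁻¹ * β * a + s * γ * b).re :=
      (re_inv_mul_add_mul_ofReal s β a γ b).symm

end Complex

/-- Scalar core of the PML coercivity estimates (4.17) and (4.24):
Re(s⁻¹ β a + s γ b) ≥ M⁻² (s₁/|s|²)(a + |s|² b) whenever M⁻² ≤ β ≤ M and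
M⁻¹ ≤ γ ≤ M², with M = 1 + σ₀/s₁ and s₁ = Re s > 0. -/
theorem pml_coercivity_scalar (s : ℂ) (hs : 0 < s.re)
    (σ₀ : ℝ) (hσ₀ : 0 < σ₀) (M : ℝ) (hM : M = 1 + σ₀ / s.re)
    (β γ : ℝ) (hβ : (M ^ 2)⁻¹ ≤ β ∧ β ≤ M) (hγ : M⁻¹ ≤ γ ∧ γ ≤ M ^ 2)
    (a b : ℝ) (ha : 0 ≤ a) (hb : 0 ≤ b) :
    (M ^ 2)⁻¹ * (s.re / ‖s‖ ^ 2) * (a + ‖s‖ ^ 2 * b) ≤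
      (s⁻¹ * (β : ℂ) * (a : ℂ) + s * (γ : ℂ) * (b : ℂ)).re := by
  have hM1 : 1 ≤ M := hM ▸ le_add_of_nonneg_right (div_nonneg hσ₀.le hs.le)
  have hMγ : (M ^ 2)⁻¹ ≤ γ :=
    (inv_anti₀ (zero_lt_one.trans_le hM1) (le_self_pow₀ hM1 two_ne_zero)).trans hγ.1
  exact Complex.le_re_inv_mul_add_mul_ofReal hs.le hβ.1 hMγ ha hb
end
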